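/- arXiv:1109.5733 — 2 statements merged into one kernel-verified Lean document; each statement's English description precedes it below -/
import Mathlib

section
/- Let σ₀ ⊆ ℝ^n be a pointed polyhedral cone, and let 𝒫, 𝒫', 𝒬 be finite collections of polyhedra in ℝ^n. Suppose that for every Q ∈ 𝒬 and every face τ of σ₀, either τ ⊆ ρ(Q) or relint(τ) ∩ ρ(Q) = ∅, and that the same condition holds for every nonempty polyhedron of the form P ∩ Q with P ∈ 𝒫, Q ∈ 𝒬. Then, taking closures in N_ℝ(σ₀) and writing |𝒫| = ⋃_{P∈𝒫} P, one has closure(ι(|𝒫|)) ∩ closure(ι(|𝒫'|)) ∩ closure(ι(|𝒬|)) = closure(ι(|𝒫| ∩ |𝒫'| ∩ |𝒬|)). -/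
open Set Pointwise

/-- A polyhedron: a finite intersection of closed halfspaces `{v : ⟨uᵢ, v⟩ ≤ cᵢ}`. -/
def IsPolyhedron {V : Type*} [AddCommGroup V] [Module ℝ V] (P : Set V) : Prop :=
  ∃ (m : ℕ) (u : Fin m → (V →ₗ[ℝ] ℝ)) (c : Fin m → ℝ),
    P = ⋂ i, {v : V | u i v ≤ c i}

/-- The recession cone `ρ(P) = {w : v + w ∈ P for all v ∈ P}`. -/
def recCone {V : Type*} [AddCommGroup V] [Module ℝ V] (P : Set V) : Set V :=
  {w : V | ∀ v ∈ P, v + w ∈ P}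

/-- A polyhedral cone: a finite intersection of halfspaces `{v : ⟨uᵢ, v⟩ ≤ 0}`. -/
def IsPolyCone {V : Type*} [AddCommGroup V] [Module ℝ V] (σ : Set V) : Prop :=
  ∃ (m : ℕ) (u : Fin m → (V →ₗ[ℝ] ℝ)), σ = ⋂ i, {v : V | u i v ≤ 0}

/-- A set is pointed if it contains no nonzero linear subspace. -/
def IsPointedSet {V : Type*} [AddCommGroup V] [Module ℝ V] (σ : Set V) : Prop :=
  ∀ W : Submodule ℝ V, (W : Set V) ⊆ σ → W = ⊥

/-- `F` is a face of the polyhedral cone `σ`. -/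
def IsFaceOfCone {V : Type*} [AddCommGroup V] [Module ℝ V] (σ F : Set V) : Prop :=
  ∃ u : V →ₗ[ℝ] ℝ, (∀ x ∈ σ, u x ≤ 0) ∧ F = {x ∈ σ | u x = 0}

/-- The dual cone `σ^∨ = {u : ⟨u, v⟩ ≤ 0 for all v ∈ σ}` inside the dual space. -/
def dualCone {n : ℕ} (σ : Set (Fin n → ℝ)) : Set ((Fin n → ℝ) →ₗ[ℝ] ℝ) :=
  {u | ∀ v ∈ σ, u v ≤ 0}

/-- The canonical map `ι : ℝⁿ → (σ₀^∨ → ℝ ∪ {-∞})`, `ι(v)(u) = ⟨u, v⟩`; the target carries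
the topology of pointwise convergence. -/
def iotaTrop {n : ℕ} (σ₀ : Set (Fin n → ℝ)) (v : Fin n → ℝ) :
    ↥(dualCone σ₀) → EReal :=
  fun u => ((u.1 v : ℝ) : EReal)

/-- The extended tropicalization `N_ℝ(σ₀)`: the set of monoid homomorphisms
`h : σ₀^∨ → ℝ ∪ {-∞}` with `h(0) = 0`, `h(u + u') = h(u) + h(u')` and `h(r • u) = r·h(u)`
for `r > 0`, realized as the `EReal`-valued functions on `σ₀^∨` never taking the value `+∞`. -/
def NRext {n : ℕ} (σ₀ : Set (Fin n → ℝ)) : Set (↥(dualCone σ₀) → EReal) :=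
  {h | (∀ u, h u ≠ ⊤) ∧
       (∀ u : ↥(dualCone σ₀), (u : (Fin n → ℝ) →ₗ[ℝ] ℝ) = 0 → h u = 0) ∧
       (∀ u u' s : ↥(dualCone σ₀),
         (s : (Fin n → ℝ) →ₗ[ℝ] ℝ) = (u : (Fin n → ℝ) →ₗ[ℝ] ℝ) + (u' : (Fin n → ℝ) →ₗ[ℝ] ℝ) →
           h s = h u + h u') ∧
       (∀ r : ℝ, 0 < r → ∀ u s : ↥(dualCone σ₀),
         (s : (Fin n → ℝ) →ₗ[ℝ] ℝ) = r • (u : (Fin n → ℝ) →ₗ[ℝ] ℝ) →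
           h s = (r : EReal) * h u)}

/-!
Write `σ₀ = {v | gⱼ v ≤ 0}`. By Farkas' lemma the `gⱼ` generate `σ₀^∨`, so a point `h` of
`N_ℝ(σ₀)` is determined by its values `h(gⱼ)`; let `τ` be the face of `σ₀` on which the `gⱼ`
with `h(gⱼ) ≠ -∞` vanish. If `h` lies in the closure of `ι(P)` for a polyhedron `P`, linear
programming duality yields a ray `p + t • w` in `P` with `w ∈ relint τ` along which `ι` converges
to `h`. For the rays found in `P ∈ 𝒞`, `P' ∈ 𝒞'` and `Q ∈ 𝒬`, the compatibility hypotheses give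
first `τ ⊆ ρ(Q)`, so that the ray in `P` eventually enters `Q`, and then `τ ⊆ ρ(P ∩ Q)`, so that
the ray in `P'` eventually lies in `P ∩ Q` as well; its image under `ι` converges to `h`.
-/

open Filter Topology

section Farkas

variable {ι : Type*}

lemma exists_nonneg_sum_erase_eq {W : Type*} [AddCommGroup W] [Module ℝ W] [DecidableEq ι]
    (x : ι → W) {s : Finset ι} {c e : ι → ℝ} (hc : ∀ j ∈ s, 0 ≤ c j)
    (he : ∑ j ∈ s, e j • x j = 0) (hpos : ∃ j ∈ s, 0 < e j) :
    ∃ j ∈ s, ∃ c' : ι → ℝ, (∀ i ∈ s, 0 ≤ c' i) ∧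
      ∑ i ∈ s.erase j, c' i • x i = ∑ i ∈ s, c i • x i := by
  obtain ⟨j, hj, hmin⟩ := (s.filter (0 < e ·)).exists_min_image (fun i => c i / e i)
    (by simpa [Finset.Nonempty] using hpos)
  obtain ⟨hjs, hej⟩ := Finset.mem_filter.1 hj
  -- move along the dependence `e` until the first coefficient vanishes
  set t := c j / e j
  refine ⟨j, hjs, fun i => c i - t * e i, fun i hi => ?_, ?_⟩
  · rcases lt_or_ge 0 (e i) with hei | hei
    · have := hmin i (Finset.mem_filter.2 ⟨hi, hei⟩)
      rw [le_div_iff₀ hei] at this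
      linarith
    · nlinarith [div_nonneg (hc j hjs) hej.le, hc i hi]
  · rw [Finset.sum_erase s (by simp [t, div_mul_cancel₀ _ hej.ne'])]
    simp only [sub_smul, Finset.sum_sub_distrib, mul_smul, ← Finset.smul_sum, he, smul_zero,
      sub_zero]

/-- Carathéodory's theorem for cones. -/
theorem exists_linearIndepOn_nonneg_sum_eq {W : Type*} [AddCommGroup W] [Module ℝ W]
    (x : ι → W) (s : Finset ι) (c : ι → ℝ) (hc : ∀ j ∈ s, 0 ≤ c j) :
    ∃ t : Finset ι, LinearIndepOn ℝ x (t : Set ι) ∧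
      ∃ d : ι → ℝ, (∀ j ∈ t, 0 ≤ d j) ∧ ∑ j ∈ t, d j • x j = ∑ j ∈ s, c j • x j := by
  classical
  induction s using Finset.strongInduction generalizing c with
  | H s ih =>
    by_cases hli : LinearIndepOn ℝ x (s : Set ι)
    · exact ⟨s, hli, c, hc, rfl⟩
    obtain ⟨e, he, j₀, hj₀, hne⟩ := not_linearIndepOn_finset_iff.1 hli
    obtain ⟨e, he, hpos⟩ : ∃ e : ι → ℝ, ∑ j ∈ s, e j • x j = 0 ∧ ∃ j ∈ s, 0 < e j := by
      rcases hne.lt_or_gt with hneg | hpos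
      · exact ⟨-e, by simp [neg_smul, he], j₀, hj₀, by simpa using hneg⟩
      · exact ⟨e, he, j₀, hj₀, hpos⟩
    obtain ⟨j, hj, c', hc', hsum⟩ := exists_nonneg_sum_erase_eq x hc he hpos
    obtain ⟨t, ht, d, hd, hsum'⟩ :=
      ih _ (Finset.erase_ssubset hj) c' fun i hi => hc' i (Finset.mem_of_mem_erase hi)
    exact ⟨t, ht, d, hd, hsum'.trans hsum⟩

theorem isClosed_image_linearCombination_nonneg [Fintype ι] {E : Type*} [AddCommGroup E]
    [Module ℝ E] [TopologicalSpace E] [IsTopologicalAddGroup E] [ContinuousSMul ℝ E] [T2Space E]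
    (x : ι → E) : IsClosed (Fintype.linearCombination ℝ x '' Ici 0) := by
  classical
  have hunion : Fintype.linearCombination ℝ x '' Ici 0 =
      ⋃ (t : Finset ι) (_ : LinearIndepOn ℝ x (t : Set ι)),
        Fintype.linearCombination ℝ (fun j : t => x j) '' Ici 0 := by
    ext b
    simp only [mem_image, mem_Ici, mem_iUnion, Fintype.linearCombination_apply]
    constructor
    · rintro ⟨c, hc, rfl⟩
      obtain ⟨t, ht, d, hd, hsum⟩ :=
        exists_linearIndepOn_nonneg_sum_eq x Finset.univ c fun j _ => hc j
      exact ⟨t, ht, fun j => d j, fun j => hd j j.2,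
        (Finset.sum_coe_sort t fun j => d j • x j).trans hsum⟩
    · rintro ⟨t, -, d, hd, rfl⟩
      refine ⟨fun j => if hj : j ∈ t then d ⟨j, hj⟩ else 0, fun j => ?_, ?_⟩
      · by_cases hj : j ∈ t
        · simpa [hj] using hd ⟨j, hj⟩
        · simp [hj]
      rw [← Finset.sum_subset (Finset.subset_univ t) fun j _ hj => by simp [hj],
        ← Finset.sum_coe_sort t]
      simp
  rw [hunion]
  refine isClosed_iUnion_of_finite fun t => isClosed_iUnion_of_finite fun ht => ?_
  exact (LinearMap.isClosedEmbedding_of_injective (LinearMap.ker_eq_bot.2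
    (linearIndependent_iff_injective_fintypeLinearCombination.1 ht))).isClosedMap _ isClosed_Ici

end Farkas

section LinearInequalities

variable {ι : Type*} [Fintype ι]

/-- Farkas' lemma. -/
theorem exists_nonneg_sum_eq_of_forall_nonpos {W : Type*} [AddCommGroup W] [Module ℝ W]
    [FiniteDimensional ℝ W] (x : ι → W) (b : W)
    (H : ∀ f : W →ₗ[ℝ] ℝ, (∀ j, f (x j) ≤ 0) → f b ≤ 0) :
    ∃ c : ι → ℝ, 0 ≤ c ∧ ∑ j, c j • x j = b := by
  classical
  let e := (Module.finBasis ℝ W).equivFun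
  suffices e b ∈ Fintype.linearCombination ℝ (fun j => e (x j)) '' Ici 0 by
    obtain ⟨c, hc, hcb⟩ := this
    refine ⟨c, hc, e.injective ?_⟩
    rw [← hcb, Fintype.linearCombination_apply, map_sum]
    simp only [map_smul]
  by_contra hb
  obtain ⟨f, u, hfK, hfb⟩ := geometric_hahn_banach_closed_point
    ((convex_Ici 0).linear_image _) (isClosed_image_linearCombination_nonneg _) hb
  have hu : 0 < u := by simpa using hfK 0 ⟨0, Set.self_mem_Ici, map_zero _⟩
  have hfx : ∀ j, f (e (x j)) ≤ 0 := by
    intro j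
    by_contra! hpos
    -- the separating functional is bounded above on the cone, hence nonpositive on it
    have := hfK _ ⟨Pi.single j (u / f (e (x j))), Pi.single_nonneg.2 (by positivity), rfl⟩
    rw [Fintype.linearCombination_apply_single, map_smul, smul_eq_mul,
      div_mul_cancel₀ _ hpos.ne'] at this
    exact this.false
  exact (H (f.toLinearMap ∘ₗ e.toLinearMap) hfx).not_gt (hu.trans hfb)

theorem exists_nonneg_sum_eq_of_nonpos_on_cone {V : Type*} [AddCommGroup V] [Module ℝ V]
    [FiniteDimensional ℝ V] (g : ι → V →ₗ[ℝ] ℝ) (u : V →ₗ[ℝ] ℝ)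
    (hu : ∀ v, (∀ i, g i v ≤ 0) → u v ≤ 0) :
    ∃ μ : ι → ℝ, 0 ≤ μ ∧ ∑ i, μ i • g i = u := by
  refine exists_nonneg_sum_eq_of_forall_nonpos g u fun f hf => ?_
  simpa using hu ((Module.evalEquiv ℝ V).symm f) (by simpa using hf)

/-- Theorem of the alternative. -/
theorem exists_certificate_of_not_exists_forall_le {V : Type*} [AddCommGroup V] [Module ℝ V]
    [FiniteDimensional ℝ V] (g : ι → V →ₗ[ℝ] ℝ) (b : ι → ℝ) (h : ¬∃ x, ∀ i, g i x ≤ b i) :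
    ∃ l : ι → ℝ, 0 ≤ l ∧ ∑ i, l i • g i = 0 ∧ ∑ i, l i * b i = -1 := by
  obtain ⟨l, hl, hsum⟩ := exists_nonneg_sum_eq_of_forall_nonpos
    (W := (V →ₗ[ℝ] ℝ) × ℝ) (fun i => (g i, b i)) (0, -1) fun f hf => by
      set v := (Module.evalEquiv ℝ V).symm (f ∘ₗ LinearMap.inl ℝ _ ℝ)
      have hf_apply : ∀ u t, f (u, t) = u v + t * f (0, 1) := by
        intro u t
        have : (u, t) = LinearMap.inl ℝ _ ℝ u + t • ((0, 1) : (V →ₗ[ℝ] ℝ) × ℝ) := by simp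
        rw [this, map_add, map_smul, smul_eq_mul]
        simp [v]
      rw [hf_apply, LinearMap.zero_apply]
      by_contra! hneg
      -- otherwise `v / (-f (0, 1))` solves the system
      refine h ⟨(-f (0, 1))⁻¹ • v, fun i => ?_⟩
      have hi := hf i
      rw [hf_apply] at hi
      rw [map_smul, smul_eq_mul, inv_mul_le_iff₀ (by linarith)]
      linarith
  refine ⟨l, hl, ?_, ?_⟩
  · simpa [Prod.fst_sum] using congrArg Prod.fst hsum
  · simpa [Prod.snd_sum] using congrArg Prod.snd hsum

theorem exists_forall_le_of_forall_exists_le_add {V : Type*} [AddCommGroup V] [Module ℝ V]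
    [FiniteDimensional ℝ V] (g : ι → V →ₗ[ℝ] ℝ) (b : ι → ℝ)
    (h : ∀ ε > 0, ∃ x, ∀ i, g i x ≤ b i + ε) : ∃ x, ∀ i, g i x ≤ b i := by
  by_contra hno
  obtain ⟨l, hl, hg, hb⟩ := exists_certificate_of_not_exists_forall_le g b hno
  have hL : 0 ≤ ∑ i, l i := Finset.sum_nonneg fun i _ => hl i
  obtain ⟨x, hx⟩ := h (∑ i, l i + 1)⁻¹ (by positivity)
  have key : 0 ≤ -1 + (∑ i, l i) * (∑ i, l i + 1)⁻¹ :=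
    calc (0 : ℝ) = (∑ i, l i • g i) x := by rw [hg]; rfl
      _ = ∑ i, l i * g i x := by simp
      _ ≤ ∑ i, l i * (b i + (∑ i, l i + 1)⁻¹) :=
        Finset.sum_le_sum fun i _ => mul_le_mul_of_nonneg_left (hx i) (hl i)
      _ = -1 + (∑ i, l i) * (∑ i, l i + 1)⁻¹ := by
        simp only [mul_add, Finset.sum_add_distrib, hb, Finset.sum_mul]
  have : (∑ i, l i) * (∑ i, l i + 1)⁻¹ < 1 := by
    rw [mul_inv_lt_iff₀ (by positivity)]
    linarith
  linarith

end LinearInequalities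

section Polyhedra

variable {V : Type*} [AddCommGroup V] [Module ℝ V] [FiniteDimensional ℝ V]
  {ι κ : Type*} [Fintype ι] [Fintype κ]

theorem IsPolyhedron.exists_mem_forall_eq {P : Set V} (hP : IsPolyhedron P)
    (φ : ι → V →ₗ[ℝ] ℝ) (r : ι → ℝ) (h : ∀ ε > 0, ∃ x ∈ P, ∀ i, |φ i x - r i| ≤ ε) :
    ∃ p ∈ P, ∀ i, φ i p = r i := by
  obtain ⟨m, a, c, rfl⟩ := hP
  obtain ⟨p, hp⟩ := exists_forall_le_of_forall_exists_le_add
    (Sum.elim a (Sum.elim φ (-φ))) (Sum.elim c (Sum.elim r (-r))) fun ε hε => by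
      obtain ⟨x, hxP, hx⟩ := h ε hε
      simp only [mem_iInter, mem_ofPred_eq] at hxP
      refine ⟨x, ?_⟩
      rintro (i | i | i) <;> simp
      · linarith [hxP i]
      · linarith [abs_le.1 (hx i)]
      · linarith [abs_le.1 (hx i)]
  refine ⟨p, by simpa using fun i => hp (.inl i), fun i => le_antisymm (hp (.inr (.inl i))) ?_⟩
  simpa using hp (.inr (.inr i))

theorem IsPolyhedron.exists_recession_direction {P : Set V} (hP : IsPolyhedron P)
    (φ : ι → V →ₗ[ℝ] ℝ) (ψ : κ → V →ₗ[ℝ] ℝ) (B : ℝ)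
    (h : ∀ T, ∃ x ∈ P, (∀ i, |φ i x| ≤ B) ∧ ∀ k, ψ k x ≤ -T) :
    ∃ w, (∀ t : ℝ, 0 ≤ t → t • w ∈ recCone P) ∧ (∀ i, φ i w = 0) ∧ ∀ k, ψ k w < 0 := by
  obtain ⟨m, a, c, rfl⟩ := hP
  -- rescaled points `x / T` of `P` far out along `ψ` approximately solve the homogeneous system
  obtain ⟨w, hw⟩ := exists_forall_le_of_forall_exists_le_add
    (Sum.elim a (Sum.elim φ (Sum.elim (-φ) ψ))) (Sum.elim 0 (Sum.elim 0 (Sum.elim 0 (-1))))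
    fun ε hε => by
      set T := 1 + (|B| + ∑ i, |c i|) / ε
      have hT : 0 < T := by positivity
      have hTε : T * ε = ε + |B| + ∑ i, |c i| := by
        simp only [T]; field_simp; ring
      have hBT : B ≤ T * ε := by
        linarith [le_abs_self B, Finset.sum_nonneg fun i (_ : i ∈ Finset.univ) => abs_nonneg (c i)]
      obtain ⟨x, hxP, hφx, hψx⟩ := h T
      simp only [mem_iInter, mem_ofPred_eq] at hxP
      have hscale : ∀ v, v ≤ T * ε → T⁻¹ * v ≤ ε := fun v hv => (inv_mul_le_iff₀ hT).2 hv
      refine ⟨T⁻¹ • x, ?_⟩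
      rintro (i | i | i | k) <;> simp only [Sum.elim_inl, Sum.elim_inr, map_smul, smul_eq_mul,
        Pi.zero_apply, Pi.neg_apply, Pi.one_apply, LinearMap.neg_apply, zero_add, mul_neg]
      · refine hscale _ ((hxP i).trans ?_)
        have := Finset.single_le_sum (fun j _ => abs_nonneg (c j)) (Finset.mem_univ i)
        linarith [le_abs_self (c i), abs_nonneg B]
      · exact hscale _ (((le_abs_self _).trans (hφx i)).trans hBT)
      · have := hscale _ (((neg_le_abs _).trans (hφx i)).trans hBT)
        rw [mul_neg] at this
        linarith
      · have := hscale (ψ k x + T) (by nlinarith [hψx k])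
        rw [mul_add, inv_mul_cancel₀ hT.ne'] at this
        linarith
  refine ⟨w, fun t ht v hv => ?_, fun i => le_antisymm (by simpa using hw (.inr (.inl i))) ?_,
    fun k => ?_⟩
  · simp only [mem_iInter, mem_ofPred_eq, map_add, map_smul, smul_eq_mul] at hv ⊢
    exact fun i => by
      nlinarith [hv i, mul_nonpos_of_nonneg_of_nonpos ht (by simpa using hw (.inl i) : a i w ≤ 0)]
  · simpa using hw (.inr (.inr (.inl i)))
  · have := hw (.inr (.inr (.inr k)))
    simp only [Sum.elim_inr, Pi.neg_apply, Pi.one_apply] at this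
    linarith

end Polyhedra

section ConeFaces

variable {V : Type*} [AddCommGroup V] [Module ℝ V] {κ : Type*}

def coneFace (g : κ → V →ₗ[ℝ] ℝ) (S : Set κ) : Set V :=
  {x | (∀ j, g j x ≤ 0) ∧ ∀ j ∈ S, g j x = 0}

theorem isFaceOfCone_coneFace [Fintype κ] (g : κ → V →ₗ[ℝ] ℝ) (S : Set κ) :
    IsFaceOfCone (⋂ j, {v | g j v ≤ 0}) (coneFace g S) := by
  classical
  refine ⟨∑ j ∈ Finset.univ.filter (· ∈ S), g j, fun x hx => ?_, ?_⟩
  · simp only [mem_iInter, mem_ofPred_eq] at hx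
    rw [LinearMap.sum_apply]
    exact Finset.sum_nonpos fun j _ => hx j
  · ext x
    simp only [coneFace, mem_iInter, mem_ofPred_eq, LinearMap.sum_apply]
    refine and_congr_right fun hx => ?_
    rw [Finset.sum_eq_zero_iff_of_nonpos fun j _ => hx j]
    simp

theorem eventually_add_smul_mem_coneFace [Finite κ] {g : κ → V →ₗ[ℝ] ℝ} {S : Set κ} {s w : V}
    (hs : ∀ j ∈ S, g j s = 0) (hw : ∀ j ∈ S, g j w = 0) (hw' : ∀ j ∉ S, g j w < 0) :
    ∀ᶠ t : ℝ in atTop, s + t • w ∈ coneFace g S := by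
  have key : ∀ j, ∀ᶠ t : ℝ in atTop, g j (s + t • w) ≤ 0 ∧ (j ∈ S → g j (s + t • w) = 0) := by
    intro j
    simp only [map_add, map_smul, smul_eq_mul]
    by_cases hj : j ∈ S
    · simp [hs j hj, hw j hj]
    · have : Tendsto (fun t => g j s + t * g j w) atTop atBot :=
        tendsto_atBot_add_const_left _ _ (tendsto_id.atTop_mul_const_of_neg (hw' j hj))
      exact (this.eventually_le_atBot 0).mono fun t ht => ⟨ht, fun h => (hj h).elim⟩
  filter_upwards [eventually_all.2 key] with t ht
  exact ⟨fun j => (ht j).1, fun j hj => (ht j).2 hj⟩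

theorem mem_intrinsicInterior_coneFace [Finite κ] [TopologicalSpace V] [IsTopologicalAddGroup V]
    [ContinuousSMul ℝ V] [T2Space V] [FiniteDimensional ℝ V] {g : κ → V →ₗ[ℝ] ℝ} {S : Set κ}
    {w : V} (hw : ∀ j ∈ S, g j w = 0) (hw' : ∀ j ∉ S, g j w < 0) :
    w ∈ intrinsicInterior ℝ (coneFace g S) := by
  have hwτ : w ∈ coneFace g S := ⟨fun j => by
    by_cases hj : j ∈ S
    · exact (hw j hj).le
    · exact (hw' j hj).le, hw⟩
  -- inside the affine span of the face only the inequalities off `S` can become tight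
  have hspan : ∀ y ∈ affineSpan ℝ (coneFace g S), ∀ j ∈ S, g j y = 0 := by
    have : affineSpan ℝ (coneFace g S) ≤ (⨅ j ∈ S, LinearMap.ker (g j)).toAffineSubspace :=
      affineSpan_le.2 fun x hx => by simpa using hx.2
    intro y hy j hj
    have hy' : y ∈ ⨅ j ∈ S, LinearMap.ker (g j) := this hy
    simp only [Submodule.mem_iInf, LinearMap.mem_ker] at hy'
    exact hy' j hj
  set U : Set V := ⋂ j ∈ Sᶜ, {x | g j x < 0}
  have hU : IsOpen U := (toFinite Sᶜ).isOpen_biInter fun j _ =>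
    isOpen_lt (LinearMap.continuous_of_finiteDimensional _) continuous_const
  refine ⟨⟨w, subset_affineSpan ℝ _ hwτ⟩, mem_interior_iff_mem_nhds.2 ?_, rfl⟩
  refine Filter.mem_of_superset ((hU.preimage continuous_subtype_val).mem_nhds
    (mem_iInter₂.2 fun j hj => hw' j hj)) fun y hy => ⟨fun j => ?_, hspan y y.2⟩
  by_cases hj : j ∈ S
  · exact (hspan y y.2 j hj).le
  · exact (mem_iInter₂.1 hy j hj).le

end ConeFaces

section RayLimit

variable {V : Type*} [AddCommGroup V] [Module ℝ V]

/-- `u (p + t • w)` tends to `e ≠ ⊤` in `EReal` as `t → ∞`. -/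
def IsRayLimit (p w : V) (u : V →ₗ[ℝ] ℝ) (e : EReal) : Prop :=
  (e = ⊥ ∧ u w < 0) ∨ (e = u p ∧ u w = 0)

namespace IsRayLimit

variable {p w : V} {u u' : V →ₗ[ℝ] ℝ} {e e' : EReal}

lemma apply_nonpos (h : IsRayLimit p w u e) : u w ≤ 0 := by
  rcases h with ⟨-, hw⟩ | ⟨-, hw⟩ <;> linarith

lemma apply_neg_of_eq_bot (h : IsRayLimit p w u e) (he : e = ⊥) : u w < 0 := by
  rcases h with ⟨-, hw⟩ | ⟨rfl, -⟩
  · exact hw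
  · exact absurd he (EReal.coe_ne_bot _)

lemma apply_eq_of_ne_bot (h : IsRayLimit p w u e) (he : e ≠ ⊥) :
    ((u p : ℝ) : EReal) = e ∧ u w = 0 := by
  rcases h with ⟨rfl, -⟩ | ⟨rfl, hw⟩
  · exact absurd rfl he
  · exact ⟨rfl, hw⟩

lemma add_smul_left (h : IsRayLimit p w u e) (t : ℝ) : IsRayLimit (p + t • w) w u e := by
  rcases h with h | ⟨rfl, hw⟩
  · exact Or.inl h
  · exact Or.inr ⟨by simp [hw], hw⟩

lemma zero : IsRayLimit p w 0 0 := Or.inr ⟨by simp, by simp⟩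

lemma add (h : IsRayLimit p w u e) (h' : IsRayLimit p w u' e') :
    IsRayLimit p w (u + u') (e + e') := by
  rcases h with ⟨rfl, hw⟩ | ⟨rfl, hw⟩
  · exact Or.inl ⟨EReal.bot_add _, by simpa using add_neg_of_neg_of_nonpos hw h'.apply_nonpos⟩
  rcases h' with ⟨rfl, hw'⟩ | ⟨rfl, hw'⟩
  · exact Or.inl ⟨EReal.add_bot _, by simpa [hw] using hw'⟩
  · exact Or.inr ⟨by simp, by simp [hw, hw']⟩

lemma smul {μ : ℝ} (hμ : 0 ≤ μ) (h : IsRayLimit p w u e) : IsRayLimit p w (μ • u) (μ * e) := by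
  rcases hμ.eq_or_lt with rfl | hμ
  · simpa using zero
  rcases h with ⟨rfl, hw⟩ | ⟨rfl, hw⟩
  · exact Or.inl ⟨EReal.coe_mul_bot_of_pos hμ, by simpa using mul_neg_of_pos_of_neg hμ hw⟩
  · exact Or.inr ⟨by simp [← EReal.coe_mul], by simp [hw]⟩

lemma sum {ι : Type*} {s : Finset ι} {u : ι → V →ₗ[ℝ] ℝ} {e : ι → EReal}
    (h : ∀ i ∈ s, IsRayLimit p w (u i) (e i)) :
    IsRayLimit p w (∑ i ∈ s, u i) (∑ i ∈ s, e i) := by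
  classical
  induction s using Finset.induction_on with
  | empty => simpa using zero
  | insert i s hi ih =>
    rw [Finset.sum_insert hi, Finset.sum_insert hi]
    exact (h i (s.mem_insert_self i)).add (ih fun j hj => h j (Finset.mem_insert_of_mem hj))

lemma tendsto (h : IsRayLimit p w u e) :
    Tendsto (fun t : ℝ => ((u (p + t • w) : ℝ) : EReal)) atTop (𝓝 e) := by
  simp only [map_add, map_smul, smul_eq_mul]
  rcases h with ⟨rfl, hw⟩ | ⟨rfl, hw⟩
  · exact EReal.tendsto_coe_atBot.comp
      (tendsto_atBot_add_const_left _ _ (tendsto_id.atTop_mul_const_of_neg hw))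
  · simp [hw]

end IsRayLimit

variable {κ : Type*} [Finite κ] {g : κ → V →ₗ[ℝ] ℝ} {e : κ → EReal} {p w : V}

theorem mem_intrinsicInterior_coneFace_of_isRayLimit [TopologicalSpace V]
    [IsTopologicalAddGroup V] [ContinuousSMul ℝ V] [T2Space V] [FiniteDimensional ℝ V]
    (h : ∀ j, IsRayLimit p w (g j) (e j)) :
    w ∈ intrinsicInterior ℝ (coneFace g {j | e j ≠ ⊥}) :=
  mem_intrinsicInterior_coneFace (fun j hj => ((h j).apply_eq_of_ne_bot hj).2)
    fun j hj => (h j).apply_neg_of_eq_bot (not_not.1 hj)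

theorem coneFace_subset_recCone_of_isRayLimit [TopologicalSpace V] [IsTopologicalAddGroup V]
    [ContinuousSMul ℝ V] [T2Space V] [FiniteDimensional ℝ V] {R : Set V}
    (hR : coneFace g {j | e j ≠ ⊥} ⊆ recCone R ∨
      intrinsicInterior ℝ (coneFace g {j | e j ≠ ⊥}) ∩ recCone R = ∅)
    (h : ∀ j, IsRayLimit p w (g j) (e j)) (hw : w ∈ recCone R) :
    coneFace g {j | e j ≠ ⊥} ⊆ recCone R :=
  hR.resolve_right (nonempty_iff_ne_empty.1 ⟨w, mem_intrinsicInterior_coneFace_of_isRayLimit h, hw⟩)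

theorem eventually_add_smul_mem_of_isRayLimit {R : Set V} {x y : V}
    (hR : coneFace g {j | e j ≠ ⊥} ⊆ recCone R) (hxR : x ∈ R)
    (hx : ∀ j, IsRayLimit x y (g j) (e j)) (h : ∀ j, IsRayLimit p w (g j) (e j)) :
    ∀ᶠ t : ℝ in atTop, p + t • w ∈ R := by
  have hs : ∀ j ∈ {j | e j ≠ ⊥}, g j (p - x) = 0 := fun j hj => by
    rw [map_sub, sub_eq_zero, ← EReal.coe_eq_coe_iff, ((hx j).apply_eq_of_ne_bot hj).1,
      ((h j).apply_eq_of_ne_bot hj).1]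
  filter_upwards [eventually_add_smul_mem_coneFace hs
    (fun j hj => ((h j).apply_eq_of_ne_bot hj).2)
    fun j hj => (h j).apply_neg_of_eq_bot (not_not.1 hj)] with t ht
  have := hR ht x hxR
  rwa [← add_assoc, add_sub_cancel] at this

end RayLimit

section ExtendedTropicalization

variable {n : ℕ} {σ₀ : Set (Fin n → ℝ)}

def dualConeGen {m : ℕ} (g : Fin m → (Fin n → ℝ) →ₗ[ℝ] ℝ) (j : Fin m) :
    ↥(dualCone (⋂ i, {v | g i v ≤ 0})) :=
  ⟨g j, fun _ hv => mem_iInter.1 hv j⟩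

lemma sum_smul_mem_dualCone {ι : Type*} (s : Finset ι) {μ : ι → ℝ} (hμ : ∀ i ∈ s, 0 ≤ μ i)
    (f : ι → ↥(dualCone σ₀)) : ∑ i ∈ s, μ i • (f i : (Fin n → ℝ) →ₗ[ℝ] ℝ) ∈ dualCone σ₀ :=
  fun v hv => by
    simpa using Finset.sum_nonpos fun i hi =>
      mul_nonpos_of_nonneg_of_nonpos (hμ i hi) ((f i).2 v hv)

lemma NRext.apply_eq_sum_mul {h : ↥(dualCone σ₀) → EReal} (hN : h ∈ NRext σ₀) {ι : Type*}
    (s : Finset ι) {μ : ι → ℝ} (hμ : ∀ i ∈ s, 0 ≤ μ i) (f : ι → ↥(dualCone σ₀))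
    (u : ↥(dualCone σ₀))
    (hu : (u : (Fin n → ℝ) →ₗ[ℝ] ℝ) = ∑ i ∈ s, μ i • (f i : (Fin n → ℝ) →ₗ[ℝ] ℝ)) :
    h u = ∑ i ∈ s, μ i * h (f i) := by
  classical
  obtain ⟨-, hzero, hadd, hsmul⟩ := hN
  induction s using Finset.induction_on generalizing u with
  | empty => simpa using hzero u (by simpa using hu)
  | insert i s hi ih =>
    have hμs : ∀ j ∈ s, 0 ≤ μ j := fun j hj => hμ j (Finset.mem_insert_of_mem hj)
    set rest : ↥(dualCone σ₀) := ⟨_, sum_smul_mem_dualCone s hμs f⟩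
    set head : ↥(dualCone σ₀) :=
      ⟨_, by simpa using sum_smul_mem_dualCone {i} (μ := μ) (by simpa using hμ i (by simp)) f⟩
    rw [Finset.sum_insert hi] at hu ⊢
    rw [hadd head rest u (by simpa [head, rest] using hu), ih hμs rest rfl]
    congr 1
    rcases (hμ i (s.mem_insert_self i)).eq_or_lt with hμi | hμi
    · rw [← hμi, EReal.coe_zero, zero_mul]
      exact hzero head (by simp [head, ← hμi])
    · exact hsmul (μ i) hμi (f i) head (by simp [head])

theorem NRext.isRayLimit_of_dualConeGen {m : ℕ} {g : Fin m → (Fin n → ℝ) →ₗ[ℝ] ℝ}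
    {h : ↥(dualCone (⋂ i, {v | g i v ≤ 0})) → EReal} (hN : h ∈ NRext _) {p w : Fin n → ℝ}
    (hg : ∀ j, IsRayLimit p w (g j) (h (dualConeGen g j)))
    (u : ↥(dualCone (⋂ i, {v | g i v ≤ 0}))) :
    IsRayLimit p w u (h u) := by
  obtain ⟨μ, hμ, hu⟩ :=
    exists_nonneg_sum_eq_of_nonpos_on_cone g u fun v hv => u.2 v (mem_iInter.2 hv)
  rw [NRext.apply_eq_sum_mul hN Finset.univ (fun j _ => hμ j) (dualConeGen g) u hu.symm, ← hu]
  exact IsRayLimit.sum fun j _ => (hg j).smul (hμ j)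

theorem tendsto_iotaTrop_of_isRayLimit {h : ↥(dualCone σ₀) → EReal} {p w : Fin n → ℝ}
    (hlim : ∀ u : ↥(dualCone σ₀), IsRayLimit p w u (h u)) :
    Tendsto (fun t : ℝ => iotaTrop σ₀ (p + t • w)) atTop (𝓝 h) :=
  tendsto_pi_nhds.2 fun u => (hlim u).tendsto

end ExtendedTropicalization

section Closure

variable {n : ℕ} {σ₀ : Set (Fin n → ℝ)} {h : ↥(dualCone σ₀) → EReal} {P : Set (Fin n → ℝ)}

lemma exists_mem_approx_of_mem_closure (hTop : ∀ u, h u ≠ ⊤)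
    (hcl : h ∈ closure (iotaTrop σ₀ '' P)) {κ : Type*} [Finite κ] (e : κ → ↥(dualCone σ₀))
    {ε : ℝ} (hε : 0 < ε) (T : ℝ) :
    ∃ x ∈ P, ∀ j, (h (e j) = ⊥ → (e j : (Fin n → ℝ) →ₗ[ℝ] ℝ) x ≤ -T) ∧
      (h (e j) ≠ ⊥ → |(e j : (Fin n → ℝ) →ₗ[ℝ] ℝ) x - (h (e j)).toReal| ≤ ε) := by
  have hnear : ∀ j, ∀ᶠ f in 𝓝 h, (h (e j) = ⊥ → f (e j) < ((-T : ℝ) : EReal)) ∧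
      (h (e j) ≠ ⊥ →
        f (e j) ∈ Ioo (((h (e j)).toReal - ε : ℝ) : EReal) ((h (e j)).toReal + ε : ℝ)) := by
    intro j
    have hev := (continuous_apply (e j)).tendsto h
    by_cases hb : h (e j) = ⊥
    · filter_upwards [hev.eventually (Iio_mem_nhds (hb ▸ EReal.bot_lt_coe (-T)))] with f hf
      exact ⟨fun _ => hf, fun h' => (h' hb).elim⟩
    · have hr := EReal.coe_toReal (hTop (e j)) hb
      have hlt : ((h (e j)).toReal - ε : ℝ) < (h (e j)).toReal ∧
          (h (e j)).toReal < (h (e j)).toReal + ε := ⟨by linarith, by linarith⟩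
      filter_upwards [hev.eventually (Ioo_mem_nhds (hr ▸ EReal.coe_lt_coe_iff.2 hlt.1)
        (hr ▸ EReal.coe_lt_coe_iff.2 hlt.2))] with f hf
      exact ⟨fun h' => (hb h').elim, fun _ => hf⟩
  obtain ⟨_, hf, ⟨x, hxP, rfl⟩⟩ := mem_closure_iff_nhds.1 hcl _ (eventually_all.2 hnear)
  refine ⟨x, hxP, fun j => ⟨fun hb => (EReal.coe_lt_coe_iff.1 ((hf j).1 hb)).le, fun hb => ?_⟩⟩
  obtain ⟨h₁, h₂⟩ := (hf j).2 hb
  rw [abs_le]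
  constructor <;> linarith [EReal.coe_lt_coe_iff.1 h₁, EReal.coe_lt_coe_iff.1 h₂]

theorem IsPolyhedron.exists_isRayLimit_of_mem_closure (hP : IsPolyhedron P)
    (hTop : ∀ u, h u ≠ ⊤) (hcl : h ∈ closure (iotaTrop σ₀ '' P)) {κ : Type*} [Fintype κ]
    (e : κ → ↥(dualCone σ₀)) :
    ∃ p ∈ P, ∃ w, (∀ t : ℝ, 0 ≤ t → t • w ∈ recCone P) ∧
      ∀ j, IsRayLimit p w (e j) (h (e j)) := by
  classical
  set r : κ → ℝ := fun j => (h (e j)).toReal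
  obtain ⟨p, hpP, hp⟩ := hP.exists_mem_forall_eq (fun j : {j // h (e j) ≠ ⊥} => (e j : _))
    (fun j => r j) fun ε hε => by
      obtain ⟨x, hx, hxe⟩ := exists_mem_approx_of_mem_closure hTop hcl e hε 0
      exact ⟨x, hx, fun j => (hxe j).2 j.2⟩
  obtain ⟨w, hwP, hw, hw'⟩ := hP.exists_recession_direction
    (fun j : {j // h (e j) ≠ ⊥} => (e j : _)) (fun j : {j // h (e j) = ⊥} => (e j : _))
    (∑ j, |r j| + 1) fun T => by
      obtain ⟨x, hx, hxe⟩ := exists_mem_approx_of_mem_closure hTop hcl e one_pos T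
      refine ⟨x, hx, fun j => ?_, fun j => (hxe j).1 j.2⟩
      have := abs_sub_abs_le_abs_sub ((e j : (Fin n → ℝ) →ₗ[ℝ] ℝ) x) (r j)
      have := (hxe j).2 j.2
      have := Finset.single_le_sum (fun i _ => abs_nonneg (r i)) (Finset.mem_univ (j : κ))
      linarith
  refine ⟨p, hpP, w, hwP, fun j => ?_⟩
  by_cases hb : h (e j) = ⊥
  · exact Or.inl ⟨hb, hw' ⟨j, hb⟩⟩
  · exact Or.inr ⟨by rw [hp ⟨j, hb⟩, EReal.coe_toReal (hTop _) hb], hw ⟨j, hb⟩⟩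

theorem exists_isRayLimit_of_mem_closure_sUnion {𝒮 : Set (Set (Fin n → ℝ))} (h𝒮fin : 𝒮.Finite)
    (h𝒮 : ∀ P ∈ 𝒮, IsPolyhedron P) (hTop : ∀ u, h u ≠ ⊤)
    (hcl : h ∈ closure (iotaTrop σ₀ '' ⋃₀ 𝒮)) {κ : Type*} [Fintype κ] (e : κ → ↥(dualCone σ₀)) :
    ∃ P ∈ 𝒮, ∃ p ∈ P, ∃ w, (∀ t : ℝ, 0 ≤ t → t • w ∈ recCone P) ∧
      ∀ j, IsRayLimit p w (e j) (h (e j)) := by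
  rw [sUnion_eq_biUnion, image_iUnion₂, h𝒮fin.closure_biUnion, mem_iUnion₂] at hcl
  obtain ⟨P, hP, hPcl⟩ := hcl
  exact ⟨P, hP, (h𝒮 P hP).exists_isRayLimit_of_mem_closure hTop hPcl e⟩

end Closure

theorem closure_triple_inter_supports_general {n : ℕ} (σ₀ : Set (Fin n → ℝ))
    (hσ₀ : IsPolyCone σ₀)
    (𝒞 𝒞' 𝒬 : Set (Set (Fin n → ℝ)))
    (h𝒞fin : 𝒞.Finite) (h𝒞'fin : 𝒞'.Finite) (h𝒬fin : 𝒬.Finite)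
    (h𝒞 : ∀ P ∈ 𝒞, IsPolyhedron P) (h𝒞' : ∀ P ∈ 𝒞', IsPolyhedron P)
    (h𝒬 : ∀ Q ∈ 𝒬, IsPolyhedron Q)
    (hcompatQ : ∀ Q ∈ 𝒬, ∀ τ : Set (Fin n → ℝ), IsFaceOfCone σ₀ τ →
      τ ⊆ recCone Q ∨ intrinsicInterior ℝ τ ∩ recCone Q = ∅)
    (hcompatPQ : ∀ P ∈ 𝒞, ∀ Q ∈ 𝒬, (P ∩ Q).Nonempty →
      ∀ τ : Set (Fin n → ℝ), IsFaceOfCone σ₀ τ →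
        τ ⊆ recCone (P ∩ Q) ∨ intrinsicInterior ℝ τ ∩ recCone (P ∩ Q) = ∅) :
    (NRext σ₀ ∩ closure (iotaTrop σ₀ '' ⋃₀ 𝒞)) ∩
        (NRext σ₀ ∩ closure (iotaTrop σ₀ '' ⋃₀ 𝒞')) ∩
        (NRext σ₀ ∩ closure (iotaTrop σ₀ '' ⋃₀ 𝒬)) =
      NRext σ₀ ∩ closure (iotaTrop σ₀ '' (⋃₀ 𝒞 ∩ ⋃₀ 𝒞' ∩ ⋃₀ 𝒬)) := by
  refine subset_antisymm (fun h ⟨⟨⟨hN, hC⟩, _, hC'⟩, _, hQ⟩ => ⟨hN, ?_⟩) fun h ⟨hN, hcl⟩ =>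
    ⟨⟨⟨hN, closure_mono (image_mono fun _ hx => hx.1.1) hcl⟩,
      hN, closure_mono (image_mono fun _ hx => hx.1.2) hcl⟩,
      hN, closure_mono (image_mono fun _ hx => hx.2) hcl⟩
  obtain ⟨m, g, rfl⟩ := hσ₀
  obtain ⟨P, hP, p, hp, w, hw, hpw⟩ :=
    exists_isRayLimit_of_mem_closure_sUnion h𝒞fin h𝒞 hN.1 hC (dualConeGen g)
  obtain ⟨P', hP', p', hp', w', hw', hpw'⟩ :=
    exists_isRayLimit_of_mem_closure_sUnion h𝒞'fin h𝒞' hN.1 hC' (dualConeGen g)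
  obtain ⟨Q, hQ, q, hq, wQ, hwQ, hqwQ⟩ :=
    exists_isRayLimit_of_mem_closure_sUnion h𝒬fin h𝒬 hN.1 hQ (dualConeGen g)
  set τ := coneFace g {j | h (dualConeGen g j) ≠ ⊥}
  have hτQ : τ ⊆ recCone Q := coneFace_subset_recCone_of_isRayLimit
    (hcompatQ Q hQ τ (isFaceOfCone_coneFace g _)) hqwQ (by simpa using hwQ 1 zero_le_one)
  obtain ⟨t₀, ht₀, hpQ⟩ := ((eventually_ge_atTop 0).and
    (eventually_add_smul_mem_of_isRayLimit hτQ hq hqwQ hpw)).exists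
  have hx₀ : p + t₀ • w ∈ P ∩ Q := ⟨by simpa using hw t₀ ht₀ p hp, hpQ⟩
  have hwPQ : w ∈ recCone (P ∩ Q) := fun x hx => ⟨by simpa using hw 1 zero_le_one x hx.1,
    hτQ (intrinsicInterior_subset (mem_intrinsicInterior_coneFace_of_isRayLimit hpw)) x hx.2⟩
  have hτPQ : τ ⊆ recCone (P ∩ Q) := coneFace_subset_recCone_of_isRayLimit
    (hcompatPQ P hP Q hQ ⟨_, hx₀⟩ τ (isFaceOfCone_coneFace g _)) hpw hwPQ
  refine mem_closure_of_tendsto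
    (tendsto_iotaTrop_of_isRayLimit (NRext.isRayLimit_of_dualConeGen hN hpw')) ?_
  filter_upwards [eventually_ge_atTop 0, eventually_add_smul_mem_of_isRayLimit hτPQ hx₀
    (fun j => (hpw j).add_smul_left t₀) hpw'] with t ht hmem
  exact mem_image_of_mem _
    ⟨⟨⟨P, hP, hmem.1⟩, P', hP', by simpa using hw' t ht p' hp'⟩, Q, hQ, hmem.2⟩

/-- Let `σ₀ ⊆ ℝⁿ` be a pointed polyhedral cone and `𝒞, 𝒞', 𝒬` finite collections of
polyhedra in `ℝⁿ`.  Suppose that for every `Q ∈ 𝒬` and every face `τ` of `σ₀` either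
`τ ⊆ ρ(Q)` or `relint(τ) ∩ ρ(Q) = ∅`, and the same holds for every nonempty `P ∩ Q` with
`P ∈ 𝒞`, `Q ∈ 𝒬`.  Then, taking closures in `N_ℝ(σ₀)` (i.e. intersecting ambient
pointwise-convergence closures with `N_ℝ(σ₀)`), one has
`closure(ι(|𝒞|)) ∩ closure(ι(|𝒞'|)) ∩ closure(ι(|𝒬|)) = closure(ι(|𝒞| ∩ |𝒞'| ∩ |𝒬|))`. -/
theorem closure_triple_inter_supports {n : ℕ} (σ₀ : Set (Fin n → ℝ))
    (hσ₀ : IsPolyCone σ₀) (hpt : IsPointedSet σ₀)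
    (𝒞 𝒞' 𝒬 : Set (Set (Fin n → ℝ)))
    (h𝒞fin : 𝒞.Finite) (h𝒞'fin : 𝒞'.Finite) (h𝒬fin : 𝒬.Finite)
    (h𝒞 : ∀ P ∈ 𝒞, IsPolyhedron P) (h𝒞' : ∀ P ∈ 𝒞', IsPolyhedron P)
    (h𝒬 : ∀ Q ∈ 𝒬, IsPolyhedron Q)
    (hcompatQ : ∀ Q ∈ 𝒬, ∀ τ : Set (Fin n → ℝ), IsFaceOfCone σ₀ τ →
      τ ⊆ recCone Q ∨ intrinsicInterior ℝ τ ∩ recCone Q = ∅)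
    (hcompatPQ : ∀ P ∈ 𝒞, ∀ Q ∈ 𝒬, (P ∩ Q).Nonempty →
      ∀ τ : Set (Fin n → ℝ), IsFaceOfCone σ₀ τ →
        τ ⊆ recCone (P ∩ Q) ∨ intrinsicInterior ℝ τ ∩ recCone (P ∩ Q) = ∅) :
    (NRext σ₀ ∩ closure (iotaTrop σ₀ '' ⋃₀ 𝒞)) ∩
        (NRext σ₀ ∩ closure (iotaTrop σ₀ '' ⋃₀ 𝒞')) ∩
        (NRext σ₀ ∩ closure (iotaTrop σ₀ '' ⋃₀ 𝒬)) =
      NRext σ₀ ∩ closure (iotaTrop σ₀ '' (⋃₀ 𝒞 ∩ ⋃₀ 𝒞' ∩ ⋃₀ 𝒬)) :=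
  closure_triple_inter_supports_general σ₀ hσ₀ 𝒞 𝒞' 𝒬 h𝒞fin h𝒞'fin h𝒬fin h𝒞 h𝒞' h𝒬 hcompatQ
    hcompatPQ
end

section
/- Let G ⊆ ℝ be a divisible additive subgroup, let 𝒫 be a finite collection of nonempty integral G-affine polyhedra in ℝ^n, and let Δ be an integral pointed fan that is a compactifying fan for 𝒫 (i.e. for each P ∈ 𝒫, the recession cone ρ(P) is a union of cones of Δ). Then there exists a Δ-decomposition of 𝒫, i.e. a refinement 𝒫' of 𝒫 consisting of integral G-affine polyhedra such that ρ(P) ∈ Δ for every P ∈ 𝒫'. -/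
open Set

/-- A fan: a finite collection of polyhedral cones, closed under taking faces, such that
the intersection of any two cones is a face of each. -/
def IsFan {V : Type*} [AddCommGroup V] [Module ℝ V] (Δ : Set (Set V)) : Prop :=
  Δ.Finite ∧ (∀ σ ∈ Δ, IsPolyCone σ) ∧
    (∀ σ ∈ Δ, ∀ F : Set V, IsFaceOfCone σ F → F ∈ Δ) ∧
    (∀ σ ∈ Δ, ∀ τ ∈ Δ, IsFaceOfCone σ (σ ∩ τ) ∧ IsFaceOfCone τ (σ ∩ τ))

/-- A pointed fan: a fan all of whose cones are pointed. -/
def IsPointedFan {V : Type*} [AddCommGroup V] [Module ℝ V] (Δ : Set (Set V)) : Prop :=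
  IsFan Δ ∧ ∀ σ ∈ Δ, IsPointedSet σ

/-- An integral `G`-affine polyhedron in `ℝⁿ`: defined by `⟨uᵢ, v⟩ ≤ aᵢ` with `uᵢ ∈ ℤⁿ`
and `aᵢ ∈ G`. -/
def IsIntegralGPolyhedron {n : ℕ} (G : AddSubgroup ℝ) (P : Set (Fin n → ℝ)) : Prop :=
  ∃ (m : ℕ) (u : Fin m → Fin n → ℤ) (a : Fin m → ℝ),
    (∀ i, a i ∈ G) ∧ P = ⋂ i, {v : Fin n → ℝ | ∑ j, (u i j : ℝ) * v j ≤ a i}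

/-- An integral polyhedral cone in `ℝⁿ`: defined by `⟨uᵢ, v⟩ ≤ 0` with `uᵢ ∈ ℤⁿ`. -/
def IsIntegralCone {n : ℕ} (σ : Set (Fin n → ℝ)) : Prop :=
  ∃ (m : ℕ) (u : Fin m → Fin n → ℤ),
    σ = ⋂ i, {v : Fin n → ℝ | ∑ j, (u i j : ℝ) * v j ≤ 0}

/-- `Δ` is a compactifying fan for `𝒞`: each recession cone `ρ(P)`, `P ∈ 𝒞`, is a union
of cones of `Δ`. -/
def IsCompactifyingFan {V : Type*} [AddCommGroup V] [Module ℝ V]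
    (Δ 𝒞 : Set (Set V)) : Prop :=
  ∀ P ∈ 𝒞, ∃ S ⊆ Δ, recCone P = ⋃₀ S

/-- `𝒞'` is a refinement of `𝒞`: a finite collection of polyhedra, each contained in a member
of `𝒞`, such that each member of `𝒞` is the union of the members of `𝒞'` it contains. -/
def IsRefinement {V : Type*} (𝒞 𝒞' : Set (Set V)) : Prop :=
  𝒞'.Finite ∧ (∀ Q ∈ 𝒞', ∃ P ∈ 𝒞, Q ⊆ P) ∧ ∀ P ∈ 𝒞, P = ⋃₀ {Q ∈ 𝒞' | Q ⊆ P}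

/-!
By Minkowski's theorem a nonempty polyhedron `P` lies in `conv p + ρ(P)` for a finite set `p`;
this follows from the finite generation of polyhedral cones (Fourier–Motzkin elimination)
applied to the homogenization of `P`. If `ρ(P) = σ₁ ∪ ⋯ ∪ σₖ` with `σᵢ = {x | ⟨vᵢⱼ, x⟩ ≤ 0}`
integral, pick `M ∈ G` bounding every `⟨vᵢⱼ, ·⟩` on `conv p` (a nonzero subgroup of `ℝ` is
unbounded) and set `Pᵢ = P ∩ {x | ⟨vᵢⱼ, x⟩ ≤ M}`. Writing `x ∈ P` as `y + w` with `y ∈ conv p`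
and `w ∈ σᵢ` puts `x` in `Pᵢ`, and `ρ(Pᵢ) = ρ(P) ∩ σᵢ = σᵢ`. If `G = 0`, then `P` is itself a
cone and the `σᵢ` already decompose it.
-/

lemma sum_sum_smul_pair {𝕜 E : Type*} [CommRing 𝕜] [AddCommGroup E] [Module 𝕜 E]
    (f : Module.Dual 𝕜 E) (A B : Finset E) (c : E → 𝕜) :
    ∑ t ∈ A, ∑ s ∈ B, (c t * c s) • (f t • s - f s • t) =
      (∑ t ∈ A, c t * f t) • ∑ s ∈ B, c s • s - (∑ s ∈ B, c s * f s) • ∑ t ∈ A, c t • t := by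
  simp only [smul_sub, Finset.sum_sub_distrib, Finset.smul_sum, smul_smul, Finset.sum_mul,
    Finset.sum_smul]
  rw [Finset.sum_comm (s := B)]
  congr 1 <;> refine Finset.sum_congr rfl fun _ _ => Finset.sum_congr rfl fun _ _ => ?_ <;>
    congr 1 <;> ring

open scoped Pointwise

section OrderedField

variable {𝕜 E : Type*} [Field 𝕜] [LinearOrder 𝕜] [IsStrictOrderedRing 𝕜]
  [AddCommGroup E] [Module 𝕜 E]

namespace PointedCone

lemma sum_smul_mem (C : PointedCone 𝕜 E) {ι : Type*} {s : Finset ι} {c : ι → 𝕜} {v : ι → E}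
    (hc : ∀ i ∈ s, 0 ≤ c i) (hv : ∀ i ∈ s, v i ∈ C) : ∑ i ∈ s, c i • v i ∈ C :=
  C.sum_mem fun i hi => C.smul_mem (hc i hi) (hv i hi)

lemma mem_hull_finset {T : Finset E} {x : E} :
    x ∈ hull 𝕜 (T : Set E) ↔ ∃ c : E → 𝕜, (∀ t ∈ T, 0 ≤ c t) ∧ ∑ t ∈ T, c t • t = x := by
  refine ⟨fun hx => ?_, fun ⟨c, hc, hx⟩ => hx ▸ sum_smul_mem _ hc fun t ht => subset_hull ht⟩
  obtain ⟨c, -, rfl⟩ := Submodule.mem_span_finset.1 hx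
  exact ⟨fun t => c t, fun t _ => (c t).2, rfl⟩

lemma fg_top [Module.Finite 𝕜 E] : (⊤ : PointedCone 𝕜 E).FG := by
  classical
  let b := Module.finBasis 𝕜 E
  refine ⟨Finset.univ.image (fun i => b i) ∪ Finset.univ.image (fun i => -b i),
    eq_top_iff.2 fun x _ => ?_⟩
  rw [← b.sum_repr x]
  refine Submodule.sum_mem _ fun i _ => ?_
  rcases le_total 0 (b.repr x i) with h | h
  · exact smul_mem _ h (subset_hull (by simp))
  · rw [← neg_smul_neg]
    exact smul_mem _ (neg_nonneg.2 h) (subset_hull (by simp))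

lemma FG.inf_dual_singleton {C : PointedCone 𝕜 E} (hC : C.FG) (f : Module.Dual 𝕜 E) :
    (C ⊓ dual .id {f}).FG := by
  classical
  obtain ⟨T, rfl⟩ := hC
  -- Fourier–Motzkin: keep the generators with `f ≥ 0` and add, for `f t ≥ 0 > f s`,
  -- the combination `f t • s - f s • t`, on which `f` vanishes.
  set A := T.filter (0 ≤ f ·)
  set B := T.filter (¬ 0 ≤ f ·)
  have hA : ∀ t ∈ A, t ∈ T ∧ 0 ≤ f t := fun t => Finset.mem_filter.1
  have hB : ∀ s ∈ B, s ∈ T ∧ f s < 0 := fun s hs => (Finset.mem_filter.1 hs).imp_right not_le.1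
  refine ⟨A ∪ (A ×ˢ B).image (fun ts => f ts.1 • ts.2 - f ts.2 • ts.1), le_antisymm ?_ ?_⟩
  · refine Submodule.span_le.2 fun y hy => ?_
    simp only [Finset.coe_union, Finset.coe_image, Finset.coe_product, mem_union,
      Finset.mem_coe, mem_image, mem_prod, Prod.exists] at hy
    rcases hy with hy | ⟨t, s, ⟨ht, hs⟩, rfl⟩
    · exact ⟨subset_hull (hA y hy).1, by simpa using (hA y hy).2⟩
    · refine ⟨?_, by simp [mul_comm]⟩
      rw [sub_eq_add_neg, ← neg_smul]
      exact add_mem (smul_mem _ (hA t ht).2 (subset_hull (hB s hs).1))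
        (smul_mem _ (neg_nonneg.2 (hB s hs).2.le) (subset_hull (hA t ht).1))
  · rintro x ⟨hx, hfx⟩
    obtain ⟨c, hc, rfl⟩ := mem_hull_finset.1 hx
    set H := hull 𝕜 (↑(A ∪ (A ×ˢ B).image (fun ts => f ts.1 • ts.2 - f ts.2 • ts.1)) : Set E)
    have hAH : ∀ t ∈ A, t ∈ H := fun t ht => subset_hull (by simp [ht])
    have hpair : ∀ t ∈ A, ∀ s ∈ B, f t • s - f s • t ∈ H := fun t ht s hs =>
      subset_hull <| Finset.mem_coe.2 <| Finset.mem_union_right _ <|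
        Finset.mem_image.2 ⟨(t, s), Finset.mem_product.2 ⟨ht, hs⟩, rfl⟩
    set α := ∑ t ∈ A, c t * f t
    set β := -∑ s ∈ B, c s * f s
    have hsplit := Finset.sum_filter_add_sum_filter_not T (0 ≤ f ·) (fun t => c t • t)
    have hαβ : β ≤ α := by
      have : 0 ≤ f (∑ t ∈ T, c t • t) := by simpa using hfx
      rw [← hsplit] at this
      simp only [map_add, map_sum, map_smul, smul_eq_mul] at this
      linarith
    have hα : 0 ≤ α := Finset.sum_nonneg fun t ht => mul_nonneg (hc t (hA t ht).1) (hA t ht).2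
    rw [← hsplit]
    rcases hα.eq_or_lt with hα0 | hαpos
    · have hB0 : ∀ s ∈ B, c s * f s = 0 := by
        refine (Finset.sum_eq_zero_iff_of_nonpos fun s hs =>
          mul_nonpos_of_nonneg_of_nonpos (hc s (hB s hs).1) (hB s hs).2.le).1 ?_
        have : 0 ≤ β := by
          refine neg_nonneg.2 (Finset.sum_nonpos fun s hs => ?_)
          exact mul_nonpos_of_nonneg_of_nonpos (hc s (hB s hs).1) (hB s hs).2.le
        linarith
      have hxB : ∑ s ∈ B, c s • s = 0 := Finset.sum_eq_zero fun s hs => by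
        rw [(mul_eq_zero.1 (hB0 s hs)).resolve_right (hB s hs).2.ne, zero_smul]
      rw [hxB, add_zero]
      exact sum_smul_mem _ (fun t ht => hc t (hA t ht).1) hAH
    · have key : ∑ t ∈ A, c t • t + ∑ s ∈ B, c s • s = (1 - β / α) • ∑ t ∈ A, c t • t + α⁻¹ •
          ∑ t ∈ A, ∑ s ∈ B, (c t * c s) • (f t • s - f s • t) := by
        rw [sum_sum_smul_pair, smul_sub, smul_smul, inv_mul_cancel₀ hαpos.ne', one_smul,
          smul_smul, ← neg_neg (∑ s ∈ B, c s * f s)]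
        module
      rw [key]
      refine add_mem (smul_mem _ ?_ (sum_smul_mem _ (fun t ht => hc t (hA t ht).1) hAH))
        (smul_mem _ (inv_nonneg.2 hα) (sum_mem fun t ht => sum_mem fun s hs => ?_))
      · rw [sub_nonneg, div_le_one hαpos]
        exact hαβ
      · exact smul_mem _ (mul_nonneg (hc t (hA t ht).1) (hc s (hB s hs).1)) (hpair t ht s hs)

theorem DualFG.fg [Module.Finite 𝕜 E] {C : PointedCone 𝕜 E} (hC : C.DualFG .id) : C.FG := by
  classical
  obtain ⟨s, rfl⟩ := hC
  induction s using Finset.induction_on with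
  | empty => simpa using fg_top
  | insert f s _ ih =>
    rw [Finset.coe_insert, dual_insert, inf_comm]
    exact FG.inf_dual_singleton ih f

end PointedCone

open PointedCone in
theorem exists_finset_subset_convexHull_add [Module.Finite 𝕜 E] {ι : Type*} [Finite ι]
    (φ : ι → E →ₗ[𝕜] 𝕜) (a : ι → 𝕜) :
    ∃ p : Finset E, {x | ∀ i, φ i x ≤ a i} ⊆ convexHull 𝕜 ↑p + {x | ∀ i, φ i x ≤ 0} := by
  classical
  -- `K` is the homogenization of the polyhedron: its generators `z` with `z.2 > 0` yield the
  -- points `p`, those with `z.2 = 0` lie in the recession cone.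
  let K : PointedCone 𝕜 (E × 𝕜) := dual .id (insert (LinearMap.snd 𝕜 E 𝕜)
    (range fun i => a i • LinearMap.snd 𝕜 E 𝕜 - φ i ∘ₗ LinearMap.fst 𝕜 E 𝕜))
  have hK : ∀ z, z ∈ K ↔ 0 ≤ z.2 ∧ ∀ i, φ i z.1 ≤ a i * z.2 := by
    simp [K]
  obtain ⟨T, hT⟩ : K.FG := DualFG.fg (DualFG.dual_of_finite _ ((finite_range _).insert _))
  have hTK : ∀ z ∈ T, 0 ≤ z.2 ∧ ∀ i, φ i z.1 ≤ a i * z.2 := fun z hz =>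
    (hK z).1 (hT ▸ subset_hull hz)
  refine ⟨(T.filter (0 < ·.2)).image fun z => z.2⁻¹ • z.1, fun x hx => ?_⟩
  obtain ⟨c, hc, hcx⟩ := mem_hull_finset.1 (hT ▸ (hK (x, 1)).2 ⟨zero_le_one, by simpa using hx⟩)
  have hx1 : ∑ z ∈ T, c z • z.1 = x := by simpa [Prod.fst_sum] using congrArg Prod.fst hcx
  have hx2 : ∑ z ∈ T, c z * z.2 = 1 := by simpa [Prod.snd_sum] using congrArg Prod.snd hcx
  have hzero : ∀ z ∈ T.filter (¬ 0 < ·.2), z.2 = 0 := fun z hz =>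
    (not_lt.1 (Finset.mem_filter.1 hz).2).antisymm (hTK z (Finset.mem_filter.1 hz).1).1
  refine ⟨∑ z ∈ T.filter (0 < ·.2), c z • z.1, ?_, ∑ z ∈ T.filter (¬ 0 < ·.2), c z • z.1, ?_,
    (Finset.sum_filter_add_sum_filter_not _ _ _).trans hx1⟩
  · have hweights : ∑ z ∈ T.filter (0 < ·.2), c z * z.2 = 1 := by
      rw [← hx2, ← Finset.sum_filter_add_sum_filter_not T (0 < ·.2), left_eq_add]
      exact Finset.sum_eq_zero fun z hz => by rw [hzero z hz, mul_zero]
    have hrescale : ∑ z ∈ T.filter (0 < ·.2), c z • z.1 =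
        ∑ z ∈ T.filter (0 < ·.2), (c z * z.2) • (z.2⁻¹ • z.1) :=
      Finset.sum_congr rfl fun z hz => by
        rw [smul_smul, mul_assoc, mul_inv_cancel₀ (Finset.mem_filter.1 hz).2.ne', mul_one]
    rw [hrescale]
    refine (convex_convexHull 𝕜 _).sum_mem (fun z hz => ?_) hweights fun z hz => ?_
    · exact mul_nonneg (hc z (Finset.mem_filter.1 hz).1) (hTK z (Finset.mem_filter.1 hz).1).1
    · exact subset_convexHull 𝕜 _ (Finset.mem_coe.2 (Finset.mem_image_of_mem _ hz))
  · intro i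
    simp only [map_sum, map_smul, smul_eq_mul]
    refine Finset.sum_nonpos fun z hz => mul_nonpos_of_nonneg_of_nonpos
      (hc z (Finset.mem_filter.1 hz).1) ?_
    simpa [hzero z hz] using (hTK z (Finset.mem_filter.1 hz).1).2 i

lemma exists_forall_mem_convexHull_le {F : Set (E →ₗ[𝕜] 𝕜)} (hF : F.Finite) (p : Finset E) :
    ∃ B, ∀ f ∈ F, ∀ y ∈ convexHull 𝕜 (p : Set E), f y ≤ B := by
  obtain ⟨B, hB⟩ := (hF.image2 (fun f q => f q) p.finite_toSet).bddAbove
  exact ⟨B, fun f hf => convexHull_min (fun q hq => hB (mem_image2_of_mem hf hq))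
    (convex_halfSpace_le f.isLinear B)⟩

end OrderedField

lemma AddSubgroup.exists_le_mem_of_ne_bot {α : Type*} [AddCommGroup α] [LinearOrder α]
    [IsOrderedAddMonoid α] [Archimedean α] {G : AddSubgroup α} (hG : G ≠ ⊥) (B : α) :
    ∃ M ∈ G, B ≤ M := by
  obtain ⟨g, hg, hg0⟩ := G.bot_or_exists_ne_zero.resolve_left hG
  obtain ⟨k, hk⟩ := Archimedean.arch B (abs_pos.2 hg0)
  exact ⟨k • |g|, G.nsmul_mem (abs_mem_iff.2 hg) k, hk⟩

section Recession

variable {E : Type*} [AddCommGroup E] [Module ℝ E]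

lemma add_nsmul_mem_of_mem_recCone {P : Set E} {v w : E} (hv : v ∈ P) (hw : w ∈ recCone P)
    (k : ℕ) : v + k • w ∈ P := by
  induction k with
  | zero => simpa using hv
  | succ k ih => rw [succ_nsmul, ← add_assoc]; exact hw _ ih

theorem recCone_setOf_forall_le {ι : Type*} (φ : ι → E →ₗ[ℝ] ℝ) (a : ι → ℝ)
    (hne : {x | ∀ i, φ i x ≤ a i}.Nonempty) :
    recCone {x | ∀ i, φ i x ≤ a i} = {x | ∀ i, φ i x ≤ 0} := by
  refine Subset.antisymm (fun w hw i => ?_) fun w hw v hv i => ?_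
  · obtain ⟨v, hv⟩ := hne
    by_contra! hpos
    obtain ⟨k, hk⟩ := exists_nat_gt ((a i - φ i v) / φ i w)
    have hvk := add_nsmul_mem_of_mem_recCone hv hw k i
    rw [map_add, map_nsmul, nsmul_eq_mul] at hvk
    rw [div_lt_iff₀ hpos] at hk
    linarith
  · rw [map_add]
    linarith [hv i, hw i]

theorem IsPolyhedron.recCone_inter {P Q : Set E} (hP : IsPolyhedron P) (hQ : IsPolyhedron Q)
    (hne : (P ∩ Q).Nonempty) : recCone (P ∩ Q) = recCone P ∩ recCone Q := by
  obtain ⟨m, φ, a, rfl⟩ := hP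
  obtain ⟨k, ψ, b, rfl⟩ := hQ
  simp only [iInter_ofPred] at hne ⊢
  have hinter : {x | ∀ i, φ i x ≤ a i} ∩ {x | ∀ j, ψ j x ≤ b j} =
      {x | ∀ i, Sum.elim φ ψ i x ≤ Sum.elim a b i} := by
    ext; simp [Sum.forall]
  rw [recCone_setOf_forall_le φ a (hne.mono inter_subset_left),
    recCone_setOf_forall_le ψ b (hne.mono inter_subset_right), hinter,
    recCone_setOf_forall_le _ _ (hinter ▸ hne)]
  ext; simp [Sum.forall]

theorem IsPolyhedron.exists_subset_convexHull_add_recCone [FiniteDimensional ℝ E] {P : Set E}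
    (hP : IsPolyhedron P) (hne : P.Nonempty) :
    ∃ p : Finset E, P ⊆ convexHull ℝ (p : Set E) + recCone P := by
  obtain ⟨m, φ, a, rfl⟩ := hP
  simp only [iInter_ofPred] at hne ⊢
  rw [recCone_setOf_forall_le φ a hne]
  exact exists_finset_subset_convexHull_add φ a

end Recession

theorem isRefinement_singleton_iff {V : Type*} {P : Set V} {𝒬 : Set (Set V)} :
    IsRefinement {P} 𝒬 ↔ 𝒬.Finite ∧ (∀ Q ∈ 𝒬, Q ⊆ P) ∧ P = ⋃₀ 𝒬 := by
  simp only [IsRefinement, mem_singleton_iff, exists_eq_left, forall_eq]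
  refine and_congr_right fun _ => and_congr_right fun hsub => ?_
  rw [sep_eq_self_iff_mem_true.2 hsub]

theorem IsRefinement.biUnion {V : Type*} {𝒞 : Set (Set V)} (h𝒞 : 𝒞.Finite)
    {𝒬 : Set V → Set (Set V)} (h𝒬 : ∀ P ∈ 𝒞, IsRefinement {P} (𝒬 P)) :
    IsRefinement 𝒞 (⋃ P ∈ 𝒞, 𝒬 P) := by
  simp only [isRefinement_singleton_iff] at h𝒬
  refine ⟨h𝒞.biUnion fun P hP => (h𝒬 P hP).1, ?_, fun P hP => ?_⟩
  · simp only [mem_iUnion₂]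
    rintro Q ⟨P, hP, hQ⟩
    exact ⟨P, hP, (h𝒬 P hP).2.1 Q hQ⟩
  · refine Subset.antisymm ?_ (sUnion_subset fun Q hQ => hQ.2)
    conv_lhs => rw [(h𝒬 P hP).2.2]
    exact sUnion_mono fun Q hQ => ⟨mem_biUnion hP hQ, (h𝒬 P hP).2.1 Q hQ⟩

section Integral

variable {n : ℕ} {G : AddSubgroup ℝ}

noncomputable def intFun (u : Fin n → ℤ) : (Fin n → ℝ) →ₗ[ℝ] ℝ :=
  ∑ j, (u j : ℝ) • LinearMap.proj j

@[simp] lemma intFun_apply (u : Fin n → ℤ) (x : Fin n → ℝ) :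
    intFun u x = ∑ j, (u j : ℝ) * x j := by
  simp [intFun]

lemma isIntegralGPolyhedron_iInter {ι : Type*} [Finite ι] (u : ι → Fin n → ℤ) (a : ι → ℝ)
    (ha : ∀ i, a i ∈ G) :
    IsIntegralGPolyhedron G (⋂ i, {v : Fin n → ℝ | ∑ j, (u i j : ℝ) * v j ≤ a i}) := by
  obtain ⟨m, ⟨e⟩⟩ := Finite.exists_equiv_fin ι
  exact ⟨m, u ∘ e.symm, a ∘ e.symm, fun i => ha _, (e.symm.surjective.iInter_comp _).symm⟩

lemma IsIntegralGPolyhedron.inter {P Q : Set (Fin n → ℝ)} (hP : IsIntegralGPolyhedron G P)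
    (hQ : IsIntegralGPolyhedron G Q) : IsIntegralGPolyhedron G (P ∩ Q) := by
  obtain ⟨m, u, a, ha, rfl⟩ := hP
  obtain ⟨k, v, b, hb, rfl⟩ := hQ
  simpa only [iInter_sum, Sum.elim_inl, Sum.elim_inr] using
    isIntegralGPolyhedron_iInter (Sum.elim u v) (Sum.elim a b) (Sum.forall.2 ⟨ha, hb⟩)

lemma IsIntegralGPolyhedron.isPolyhedron {P : Set (Fin n → ℝ)} (hP : IsIntegralGPolyhedron G P) :
    IsPolyhedron P := by
  obtain ⟨m, u, a, -, rfl⟩ := hP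
  exact ⟨m, fun i => intFun (u i), a, by simp⟩

lemma IsIntegralGPolyhedron.isIntegralCone {P : Set (Fin n → ℝ)}
    (hP : IsIntegralGPolyhedron ⊥ P) : IsIntegralCone P := by
  obtain ⟨m, u, a, ha, rfl⟩ := hP
  exact ⟨m, u, by simp [AddSubgroup.mem_bot.1 (ha _)]⟩

lemma IsIntegralCone.isIntegralGPolyhedron {σ : Set (Fin n → ℝ)} (hσ : IsIntegralCone σ) :
    IsIntegralGPolyhedron G σ := by
  obtain ⟨m, u, rfl⟩ := hσ
  exact ⟨m, u, 0, fun _ => G.zero_mem, by simp⟩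

lemma IsIntegralCone.recCone_eq {σ : Set (Fin n → ℝ)} (hσ : IsIntegralCone σ) :
    recCone σ = σ := by
  obtain ⟨m, u, rfl⟩ := hσ
  simpa [iInter_ofPred] using recCone_setOf_forall_le (fun i => intFun (u i)) 0 ⟨0, by simp⟩

theorem IsIntegralCone.exists_truncation {σ : Set (Fin n → ℝ)} (hσ : IsIntegralCone σ)
    (hG : G ≠ ⊥) (p : Finset (Fin n → ℝ)) :
    ∃ T, IsIntegralGPolyhedron G T ∧ recCone T = σ ∧ convexHull ℝ (p : Set _) + σ ⊆ T := by
  obtain ⟨m, u, rfl⟩ := hσ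
  obtain ⟨B, hB⟩ := exists_forall_mem_convexHull_le (finite_range fun i => intFun (u i)) p
  -- `0 ≤ M` makes the truncation nonempty, so that its recession cone is `σ`.
  obtain ⟨M, hMG, hM⟩ := AddSubgroup.exists_le_mem_of_ne_bot hG (max B 0)
  refine ⟨⋂ i, {v | ∑ j, (u i j : ℝ) * v j ≤ M}, ⟨m, u, fun _ => M, fun _ => hMG, rfl⟩, ?_, ?_⟩
  · simpa [iInter_ofPred] using recCone_setOf_forall_le (fun i => intFun (u i)) (fun _ => M)
      ⟨0, fun _ => by simpa using (le_max_right B 0).trans hM⟩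
  · rintro _ ⟨y, hy, w, hw, rfl⟩
    simp only [mem_iInter, mem_ofPred_eq] at hw ⊢
    intro i
    have hyB := hB _ (mem_range_self i) y hy
    simp only [intFun_apply] at hyB
    simp only [Pi.add_apply, mul_add, Finset.sum_add_distrib]
    linarith [hw i, le_max_left B 0]

theorem IsIntegralGPolyhedron.exists_isRefinement_singleton {P : Set (Fin n → ℝ)}
    (hP : IsIntegralGPolyhedron G P) (hne : P.Nonempty) {S : Set (Set (Fin n → ℝ))}
    (hS : S.Finite) (hSint : ∀ σ ∈ S, IsIntegralCone σ) (hrec : recCone P = ⋃₀ S) :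
    ∃ 𝒬, IsRefinement {P} 𝒬 ∧ ∀ Q ∈ 𝒬, IsIntegralGPolyhedron G Q ∧ recCone Q ∈ S := by
  rcases eq_or_ne G ⊥ with rfl | hG
  · rw [hP.isIntegralCone.recCone_eq] at hrec
    refine ⟨S, isRefinement_singleton_iff.2 ⟨hS, fun σ hσ => hrec ▸ subset_sUnion_of_mem hσ,
      hrec⟩, fun σ hσ => ⟨(hSint σ hσ).isIntegralGPolyhedron, ?_⟩⟩
    rwa [(hSint σ hσ).recCone_eq]
  · obtain ⟨p, hp⟩ := hP.isPolyhedron.exists_subset_convexHull_add_recCone hne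
    choose! T hTint hTrec hTsub using fun σ (hσ : σ ∈ S) => (hSint σ hσ).exists_truncation hG p
    refine ⟨{Q | ∃ σ ∈ S, P ∩ T σ = Q ∧ Q.Nonempty}, isRefinement_singleton_iff.2 ⟨?_, ?_, ?_⟩, ?_⟩
    · exact (hS.image fun σ => P ∩ T σ).subset fun _ ⟨σ, hσ, hQ, _⟩ => ⟨σ, hσ, hQ⟩
    · rintro _ ⟨σ, -, rfl, -⟩
      exact inter_subset_left
    · refine Subset.antisymm (fun x hx => ?_) (sUnion_subset ?_)
      · obtain ⟨y, hy, w, hw, rfl⟩ := hp hx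
        obtain ⟨σ, hσ, hwσ⟩ := hrec ▸ hw
        have hyw : y + w ∈ P ∩ T σ := ⟨hx, hTsub σ hσ ⟨y, hy, w, hwσ, rfl⟩⟩
        exact ⟨_, ⟨σ, hσ, rfl, _, hyw⟩, hyw⟩
      · rintro _ ⟨σ, -, rfl, -⟩
        exact inter_subset_left
    · rintro _ ⟨σ, hσ, rfl, hne'⟩
      refine ⟨hP.inter (hTint σ hσ), ?_⟩
      rw [hP.isPolyhedron.recCone_inter (hTint σ hσ).isPolyhedron hne', hTrec σ hσ,
        inter_eq_right.2 (hrec ▸ subset_sUnion_of_mem hσ)]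
      exact hσ

end Integral

theorem exists_delta_decomposition_general {n : ℕ} (G : AddSubgroup ℝ)
    (𝒞 : Set (Set (Fin n → ℝ))) (h𝒞fin : 𝒞.Finite)
    (h𝒞 : ∀ P ∈ 𝒞, IsIntegralGPolyhedron G P ∧ P.Nonempty)
    (Δ : Set (Set (Fin n → ℝ))) (hΔ : IsPointedFan Δ)
    (hΔint : ∀ σ ∈ Δ, IsIntegralCone σ) (hcpt : IsCompactifyingFan Δ 𝒞) :
    ∃ 𝒞' : Set (Set (Fin n → ℝ)), IsRefinement 𝒞 𝒞' ∧
      (∀ Q ∈ 𝒞', IsIntegralGPolyhedron G Q) ∧ ∀ Q ∈ 𝒞', recCone Q ∈ Δ := by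
  choose! S hSΔ hS using hcpt
  choose! 𝒬 h𝒬 h𝒬int using fun P hP => (h𝒞 P hP).1.exists_isRefinement_singleton (h𝒞 P hP).2
    (hΔ.1.1.subset (hSΔ P hP)) (fun σ hσ => hΔint σ (hSΔ P hP hσ)) (hS P hP)
  refine ⟨⋃ P ∈ 𝒞, 𝒬 P, IsRefinement.biUnion h𝒞fin h𝒬, ?_, ?_⟩ <;>
    simp only [mem_iUnion₂] <;> rintro Q ⟨P, hP, hQ⟩
  · exact (h𝒬int P hP Q hQ).1
  · exact hSΔ P hP (h𝒬int P hP Q hQ).2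

/-- If `G ⊆ ℝ` is a divisible subgroup, `𝒞` a finite collection of nonempty integral
`G`-affine polyhedra in `ℝⁿ`, and `Δ` an integral pointed compactifying fan for `𝒞`, then
there is a `Δ`-decomposition of `𝒞`: a refinement `𝒞'` of `𝒞` consisting of integral
`G`-affine polyhedra with `ρ(Q) ∈ Δ` for all `Q ∈ 𝒞'`. -/
theorem exists_delta_decomposition {n : ℕ} (G : AddSubgroup ℝ)
    (hGdiv : ∀ g ∈ G, ∀ k : ℕ, 0 < k → ∃ g' ∈ G, (k : ℝ) * g' = g)
    (𝒞 : Set (Set (Fin n → ℝ))) (h𝒞fin : 𝒞.Finite)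
    (h𝒞 : ∀ P ∈ 𝒞, IsIntegralGPolyhedron G P ∧ P.Nonempty)
    (Δ : Set (Set (Fin n → ℝ))) (hΔ : IsPointedFan Δ)
    (hΔint : ∀ σ ∈ Δ, IsIntegralCone σ) (hcpt : IsCompactifyingFan Δ 𝒞) :
    ∃ 𝒞' : Set (Set (Fin n → ℝ)), IsRefinement 𝒞 𝒞' ∧
      (∀ Q ∈ 𝒞', IsIntegralGPolyhedron G Q) ∧ ∀ Q ∈ 𝒞', recCone Q ∈ Δ :=
  exists_delta_decomposition_general G 𝒞 h𝒞fin h𝒞 Δ hΔ hΔint hcpt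
end
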